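/- The pencil of plane cubics (x+y)(y+z)(z+x) + t·xyz = 0 has singular members exactly at the parameter values t = ∞, 0, 1, -8: i.e., for t ∈ ℂ with t ≠ 0, 1, -8, the cubic curve (x+y)(y+z)(z+x) + t·xyz = 0 in ℙ² is smooth. -/
import Mathlib


/-- The cubic form `F_t(x,y,z) = (x+y)(y+z)(z+x) + t·xyz`. -/
noncomputable def F (t x y z : ℂ) : ℂ := (x + y) * (y + z) * (z + x) + t * x * y * z

private lemma deriv_quad (a b c x : ℂ) :
    deriv (fun s => a * s ^ 2 + b * s + c) x = 2 * a * x + b := by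
  have h1 : HasDerivAt (fun s : ℂ => s ^ 2) (2 * x) x := by
    simpa using hasDerivAt_pow 2 x
  have h2 : HasDerivAt (fun s : ℂ => a * s ^ 2 + b * s + c) (a * (2 * x) + b * 1) x :=
    ((h1.const_mul a).add ((hasDerivAt_id x).const_mul b)).add_const c
  rw [h2.deriv]; ring

private lemma sq_zero {c x : ℂ} (hc : c ≠ 0) (h : c * x ^ 2 = 0) : x = 0 := by
  rcases mul_eq_zero.mp h with h' | h'
  · exact absurd h' hc
  · exact sq_eq_zero_iff.mp h'

theorem stmt9 (t : ℂ) (ht0 : t ≠ 0) (ht1 : t ≠ 1) (ht8 : t ≠ -8) :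
    ∀ x y z : ℂ, ¬ (x = 0 ∧ y = 0 ∧ z = 0) →
      ¬ (F t x y z = 0 ∧
         deriv (fun s => F t s y z) x = 0 ∧
         deriv (fun s => F t x s z) y = 0 ∧
         deriv (fun s => F t x y s) z = 0) := by
  intro x y z hne ⟨_, hx, hy, hz⟩
  -- rewrite the partial derivatives as explicit polynomials
  rw [show (fun s => F t s y z)
      = fun s => (y + z) * s ^ 2 + ((y + z) ^ 2 + t * y * z) * s + (y + z) * (y * z) from
    funext fun s => by simp only [F]; ring, deriv_quad] at hx
  rw [show (fun s => F t x s z)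
      = fun s => (z + x) * s ^ 2 + ((z + x) ^ 2 + t * x * z) * s + (z + x) * (x * z) from
    funext fun s => by simp only [F]; ring, deriv_quad] at hy
  rw [show (fun s => F t x y s)
      = fun s => (x + y) * s ^ 2 + ((x + y) ^ 2 + t * x * y) * s + (x + y) * (x * y) from
    funext fun s => by simp only [F]; ring, deriv_quad] at hz
  -- factored differences of gradient equations
  have h1 : (y - x) * (x + y + z + (t - 1) * z) = 0 := by linear_combination hx - hy
  have h2 : (z - y) * (x + y + z + (t - 1) * x) = 0 := by linear_combination hy - hz
  have h3 : (z - x) * (x + y + z + (t - 1) * y) = 0 := by linear_combination hx - hz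
  have ht0' : (-3 : ℂ) * t ≠ 0 := by
    intro h; exact ht0 (by linear_combination (-1/3 : ℂ) * h)
  rcases mul_eq_zero.mp h1 with hxy | hq1
  · have hy' : y = x := sub_eq_zero.mp hxy
    rcases mul_eq_zero.mp h2 with hzy | hq2
    · have hz' : z = y := sub_eq_zero.mp hzy
      rw [hz', hy'] at hx hne
      have key : (8 + t) * x ^ 2 = 0 := by linear_combination hx
      have h8 : (8 : ℂ) + t ≠ 0 := fun h => ht8 (by linear_combination h)
      have hx0 : x = 0 := sq_zero h8 key
      exact hne ⟨hx0, hx0, hx0⟩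
    · rw [hy'] at hq2 hx hne
      have hz' : z = -(t + 1) * x := by linear_combination hq2
      rw [hz'] at hx hne
      have key : (-3) * t * x ^ 2 = 0 := by linear_combination hx
      have hx0 : x = 0 := sq_zero ht0' key
      exact hne ⟨hx0, hx0, by rw [hx0]; ring⟩
  · rcases mul_eq_zero.mp h3 with hzx | hq3
    · have hz' : z = x := sub_eq_zero.mp hzx
      rw [hz'] at hq1 hz hne
      have hy' : y = -(t + 1) * x := by linear_combination hq1
      rw [hy'] at hz hne
      have key : (-3) * t * x ^ 2 = 0 := by linear_combination hz
      have hx0 : x = 0 := sq_zero ht0' key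
      exact hne ⟨hx0, by rw [hx0]; ring, hx0⟩
    · have ht1' : t - 1 ≠ 0 := sub_ne_zero.mpr ht1
      have hzy : z - y = 0 := by
        have h : (t - 1) * (z - y) = 0 := by linear_combination hq1 - hq3
        rcases mul_eq_zero.mp h with h' | h'
        · exact absurd h' ht1'
        · exact h'
      have hz' : z = y := sub_eq_zero.mp hzy
      rw [hz'] at hq3 hy hne
      have hx' : x = -(t + 1) * y := by linear_combination hq3
      rw [hx'] at hy hne
      have key : (-3) * t * y ^ 2 = 0 := by linear_combination hy
      have hy0 : y = 0 := sq_zero ht0' key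
      exact hne ⟨by rw [hy0]; ring, hy0, hy0⟩
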